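/- For every integer n ≥ 1 and every antichain 𝓐 in 𝔹•^n, the cardinality of 𝓐 is at most C(2n, n); moreover, the set 𝔹⊛^n of words in 𝔹•^n in which the symbol • and the symbol ∗ occur the same number of times is an antichain in 𝔹•^n of cardinality exactly C(2n, n). -/

import Mathlib

/-- The alphabet 𝔹• = {0, 1, ∗, •}. -/
inductive BB : Type
  | zero
  | one
  | star
  | reject
deriving DecidableEq

instance : Fintype BB :=
  ⟨{BB.zero, BB.one, BB.star, BB.reject}, by intro x; cases x <;> simp⟩

/-- The partial order ≼ on 𝔹•: • ≼ 0, 1, ∗ and 0, 1 ≼ ∗ (0, 1 incomparable). -/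
def BBle : BB → BB → Prop := fun a b => a = BB.reject ∨ b = BB.star ∨ a = b

/-- Componentwise extension of ≼ to words over 𝔹•. -/
def wordLe {n : ℕ} (u v : Fin n → BB) : Prop := ∀ j, BBle (u j) (v j)


/-!
Identify a letter `a` of 𝔹• with the set of bits `c ∈ {0,1}` such that `c ≼ a`: this sends
`•, 0, 1, ∗` to `∅, {0}, {1}, {0,1}` and turns `≼` into inclusion. Hence a word of length `n` is
a subset of `Fin n × Bool`, `≼` on words is inclusion, and an antichain of words is a Sperner
family on `2n` points, of size at most `C(2n, n)`. The encoded word has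
`n + #∗ - #•` elements, so the words with `#• = #∗` are exactly the `n`-subsets.
-/

open Finset

instance : DecidableRel BBle := fun a b =>
  inferInstanceAs (Decidable (a = BB.reject ∨ b = BB.star ∨ a = b))

namespace BB

def ofBool : Bool → BB
  | false => zero
  | true => one

def down (a : BB) : Finset Bool := univ.filter fun c => BBle (ofBool c) a

theorem bble_iff_down_subset (a b : BB) : BBle a b ↔ a.down ⊆ b.down := by
  revert a b; decide

theorem down_injective : Function.Injective down := by
  decide

noncomputable def downEquiv : BB ≃ Finset Bool :=
  .ofBijective down <| (Fintype.bijective_iff_injective_and_card down).2 ⟨down_injective, rfl⟩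

theorem card_down_add (a : BB) :
    #a.down + (if a = reject then 1 else 0) = 1 + (if a = star then 1 else 0) := by
  revert a; decide

variable {ι : Type*} [Fintype ι]

def encode (v : ι → BB) : Finset (ι × Bool) := univ.filter fun p => p.2 ∈ (v p.1).down

@[simp]
theorem mem_encode {v : ι → BB} {p : ι × Bool} : p ∈ encode v ↔ p.2 ∈ (v p.1).down := by
  simp [encode]

theorem encode_subset_encode_iff {u v : ι → BB} :
    encode u ⊆ encode v ↔ ∀ i, BBle (u i) (v i) := by
  simp only [bble_iff_down_subset, subset_iff, mem_encode, Prod.forall]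

theorem card_encode_add (v : ι → BB) :
    #(encode v) + #{i | v i = reject} = Fintype.card ι + #{i | v i = star} := by
  have h : #(encode v) = ∑ i, #(v i).down := by
    rw [encode, card_filter, Fintype.sum_prod_type]
    simp only [sum_boole, Nat.cast_id, filter_mem_eq_inter, univ_inter]
  rw [h, card_filter, card_filter, ← sum_add_distrib]
  simp only [card_down_add, sum_add_distrib]
  simp

theorem card_encode_eq_iff (v : ι → BB) :
    #(encode v) = Fintype.card ι ↔ #{i | v i = reject} = #{i | v i = star} := by
  have := card_encode_add v
  omega

variable [DecidableEq ι]

noncomputable def wordEquiv : (ι → BB) ≃ Finset (ι × Bool) where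
  toFun := encode
  invFun S i := downEquiv.symm (univ.filter fun c => (i, c) ∈ S)
  left_inv v := by
    funext i
    apply downEquiv.injective
    ext c
    simp [downEquiv]
  right_inv S := by
    ext ⟨i, c⟩
    rw [mem_encode]
    change c ∈ downEquiv (downEquiv.symm _) ↔ _
    simp

theorem card_le_choose_of_isAntichain (A : Finset (ι → BB))
    (hA : ∀ v ∈ A, ∀ w ∈ A, (∀ i, BBle (v i) (w i)) → v = w) :
    #A ≤ (2 * Fintype.card ι).choose (Fintype.card ι) := by
  have hanti : IsAntichain (· ⊆ ·) (SetLike.coe (A.map wordEquiv.toEmbedding)) := by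
    rintro _ hS _ hT hne hST
    obtain ⟨v, hv, rfl⟩ := mem_map.1 hS
    obtain ⟨w, hw, rfl⟩ := mem_map.1 hT
    exact hne (congrArg _ (hA v hv w hw (encode_subset_encode_iff.1 hST)))
  simpa [Fintype.card_prod, mul_comm] using hanti.sperner

def balancedWords : Finset (ι → BB) := {v | #{i | v i = reject} = #{i | v i = star}}

theorem eq_of_mem_balancedWords_of_bble {v w : ι → BB} (hv : v ∈ balancedWords)
    (hw : w ∈ balancedWords) (hvw : ∀ i, BBle (v i) (w i)) : v = w := by
  simp only [balancedWords, mem_filter, mem_univ, true_and, ← card_encode_eq_iff] at hv hw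
  apply wordEquiv.injective
  exact eq_of_subset_of_card_le (encode_subset_encode_iff.2 hvw) (by simp [wordEquiv, hv, hw])

theorem map_wordEquiv_balancedWords :
    balancedWords.map wordEquiv.toEmbedding =
      powersetCard (Fintype.card ι) (univ : Finset (ι × Bool)) := by
  ext S
  rw [mem_map_equiv, mem_powersetCard]
  simp only [balancedWords, mem_filter, mem_univ, true_and, ← card_encode_eq_iff, subset_univ]
  exact iff_of_eq (congrArg (#· = _) (wordEquiv.apply_symm_apply S))

theorem card_balancedWords :
    #(balancedWords : Finset (ι → BB)) = (2 * Fintype.card ι).choose (Fintype.card ι) := by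
  rw [← card_map, map_wordEquiv_balancedWords, card_powersetCard, card_univ, Fintype.card_prod]
  simp [mul_comm]

end BB

theorem antichain_Bdot_bound_general (n : ℕ)
    (A : Finset (Fin n → BB))
    (hanti : ∀ v ∈ A, ∀ w ∈ A, wordLe v w → v = w) :
    A.card ≤ (2 * n).choose n ∧
    ∀ W : Finset (Fin n → BB),
      W = Finset.univ.filter (fun v =>
        (Finset.univ.filter (fun j => v j = BB.reject)).card =
          (Finset.univ.filter (fun j => v j = BB.star)).card) →
      (∀ v ∈ W, ∀ w ∈ W, wordLe v w → v = w) ∧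
      W.card = (2 * n).choose n := by
  refine ⟨by simpa using BB.card_le_choose_of_isAntichain A hanti, ?_⟩
  rintro W rfl
  have hcard := BB.card_balancedWords (ι := Fin n)
  rw [Fintype.card_fin] at hcard
  exact ⟨fun v hv w hw => BB.eq_of_mem_balancedWords_of_bble hv hw, hcard⟩

theorem antichain_Bdot_bound (n : ℕ) (hn : 1 ≤ n)
    (A : Finset (Fin n → BB))
    (hanti : ∀ v ∈ A, ∀ w ∈ A, wordLe v w → v = w) :
    A.card ≤ (2 * n).choose n ∧
    ∀ W : Finset (Fin n → BB),
      W = Finset.univ.filter (fun v =>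
        (Finset.univ.filter (fun j => v j = BB.reject)).card =
          (Finset.univ.filter (fun j => v j = BB.star)).card) →
      (∀ v ∈ W, ∀ w ∈ W, wordLe v w → v = w) ∧
      W.card = (2 * n).choose n :=
  antichain_Bdot_bound_general n A hanti
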